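/- The inverse limit functor from the category of pro-objects of finite-length modules over a ring Λ to Λ-modules, sending {M_α} to lim M_α, is exact and reflects isomorphisms. In particular, if lim_I M_α ≅ 0 for a strict pro-object (all transition maps surjective), then {M_α} ≅ 0 in the pro-category. -/

import Mathlib

/-!
STATEMENT 8: The inverse limit functor from pro-objects of finite-length modules over a
complete local Noetherian ring `Λ` to `Λ`-modules is exact and reflects isomorphisms; in
particular a strict pro-object (all transition maps surjective) whose limit vanishes is
itself zero.

We formalize exactness as: for any levelwise short exact sequence of cofiltered systems
of finite-length `Λ`-modules, the induced sequence of limits is short exact; and the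
"in particular" clause: if all transition maps of a system are surjective and the limit
is zero, then every term of the system is zero (which is what it means for a strict
pro-object to be isomorphic to `0` in the pro-category).
-/

open CategoryTheory Limits



namespace ProLimAux

section Coset
variable {R : Type} [CommRing R] {M : Type} [AddCommGroup M] [Module R M]

/-- `A` is a (nonempty) coset of a submodule. -/
def IsCoset (R : Type) [CommRing R] {M : Type} [AddCommGroup M] [Module R M]
    (A : Set M) : Prop :=
  ∃ (N : Submodule R M) (x : M), A = {y | y - x ∈ N}

lemma mem_coset_base (N : Submodule R M) (x : M) : x ∈ {y | y - x ∈ N} := by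
  simp [Set.mem_setOf_eq, sub_self]

lemma IsCoset.nonempty {A : Set M} (h : IsCoset R A) : A.Nonempty := by
  obtain ⟨N, x, rfl⟩ := h; exact ⟨x, mem_coset_base N x⟩

lemma coset_rebase (N : Submodule R M) (x : M) {c : M}
    (hc : c ∈ {y | y - x ∈ N}) : {y | y - x ∈ N} = {y | y - c ∈ N} := by
  ext y
  simp only [Set.mem_setOf_eq] at *
  constructor
  · intro h
    have := N.sub_mem h hc
    rwa [sub_sub_sub_cancel_right] at this
  · intro h
    have := N.add_mem h hc
    rwa [sub_add_sub_cancel] at this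

lemma coset_subset_le {N N' : Submodule R M} {x x' : M}
    (h : {y | y - x ∈ N} ⊆ {y | y - x' ∈ N'}) : N ≤ N' := by
  intro n hn
  have h1 : x + n ∈ {y | y - x' ∈ N'} := h (by simpa [Set.mem_setOf_eq] using hn)
  have h2 : x ∈ {y | y - x' ∈ N'} := h (mem_coset_base N x)
  have := N'.sub_mem h1 h2
  simpa [add_sub_cancel_left] using this

lemma coset_eq_of_subset_of_le {N N' : Submodule R M} {x x' : M}
    (h : {y | y - x ∈ N} ⊆ {y | y - x' ∈ N'}) (hle : N' ≤ N) :
    {y | y - x ∈ N} = {y | y - x' ∈ N'} := by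
  have hx : x ∈ {y | y - x' ∈ N'} := h (mem_coset_base N x)
  rw [coset_rebase N' x' hx]
  apply Set.Subset.antisymm
  · intro y hy; exact (coset_rebase N' x' hx) ▸ (h hy)
  · intro y hy; exact hle hy

lemma coset_inter {A B : Set M} (hA : IsCoset R A) (hB : IsCoset R B)
    (hne : (A ∩ B).Nonempty) : IsCoset R (A ∩ B) := by
  obtain ⟨c, hcA, hcB⟩ := hne
  obtain ⟨N, x, rfl⟩ := hA
  obtain ⟨N', x', rfl⟩ := hB
  refine ⟨N ⊓ N', c, ?_⟩
  rw [coset_rebase N x hcA, coset_rebase N' x' hcB]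
  ext y; simp [Set.mem_setOf_eq, Submodule.mem_inf]

lemma coset_univ : IsCoset R (Set.univ : Set M) :=
  ⟨⊤, 0, by ext y; simp⟩

lemma coset_image {M' : Type} [AddCommGroup M'] [Module R M']
    (f : M →ₗ[R] M') {A : Set M} (hA : IsCoset R A) : IsCoset R (f '' A) := by
  obtain ⟨N, x, rfl⟩ := hA
  refine ⟨N.map f, f x, ?_⟩
  ext z
  simp only [Set.mem_image, Set.mem_setOf_eq, Submodule.mem_map]
  constructor
  · rintro ⟨y, hy, rfl⟩; exact ⟨y - x, hy, by rw [map_sub]⟩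
  · rintro ⟨n, hn, hz⟩
    exact ⟨x + n, by simpa [add_sub_cancel_left] using hn, by rw [map_add, hz]; abel⟩

lemma coset_preimage {M' : Type} [AddCommGroup M'] [Module R M']
    (f : M →ₗ[R] M') {A : Set M'} (hA : IsCoset R A)
    (hne : (f ⁻¹' A).Nonempty) : IsCoset R (f ⁻¹' A) := by
  obtain ⟨N, x, rfl⟩ := hA
  obtain ⟨a, ha⟩ := hne
  refine ⟨N.comap f, a, ?_⟩
  ext b
  simp only [Set.mem_preimage, Set.mem_setOf_eq, Submodule.mem_comap, map_sub]
  constructor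
  · intro h
    have := N.sub_mem h ha
    rwa [sub_sub_sub_cancel_right] at this
  · intro h
    have := N.add_mem h ha
    rwa [sub_add_sub_cancel] at this

lemma coset_singleton (x : M) : IsCoset R ({x} : Set M) :=
  ⟨⊥, x, by ext y; simp [sub_eq_zero]⟩

/-- In an Artinian module, a downward-directed nonempty family of cosets has a minimum. -/
lemma exists_min_of_directed [IsArtinian R M] (S : Set (Set M))
    (hS : ∀ A ∈ S, IsCoset R A)
    (hdir : ∀ A ∈ S, ∀ B ∈ S, ∃ C ∈ S, C ⊆ A ∧ C ⊆ B)
    (hne : S.Nonempty) : ∃ A₀ ∈ S, ∀ A ∈ S, A₀ ⊆ A := by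
  classical
  let T : Set (Submodule R M) := {N | ∃ A ∈ S, ∃ x, A = {y | y - x ∈ N}}
  have hTne : T.Nonempty := by
    obtain ⟨A, hA⟩ := hne
    obtain ⟨N, x, hx⟩ := hS A hA
    exact ⟨N, A, hA, x, hx⟩
  obtain ⟨N₀, hN₀T, hN₀min⟩ := (IsWellFounded.wf (r := ((· < ·) : Submodule R M → _ → _))).has_min T hTne
  obtain ⟨A₀, hA₀S, x₀, hA₀⟩ := hN₀T
  refine ⟨A₀, hA₀S, fun A hA => ?_⟩
  obtain ⟨C, hCS, hCA₀, hCA⟩ := hdir A₀ hA₀S A hA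
  obtain ⟨NC, xC, hC⟩ := hS C hCS
  have hle : NC ≤ N₀ := coset_subset_le (by rw [← hC, ← hA₀]; exact hCA₀)
  have heq : NC = N₀ := by
    by_contra hne'
    exact hN₀min NC ⟨C, hCS, xC, hC⟩ (lt_of_le_of_ne hle hne')
  have : C = A₀ := by
    rw [hC, hA₀]
    exact coset_eq_of_subset_of_le (by rw [← hC, ← hA₀]; exact hCA₀) (heq ▸ le_refl NC)
  rw [← this]; exact hCA

/-- In an Artinian module, an intersection of a family of cosets with the finite
intersection property is a (nonempty) coset. -/
lemma coset_iInter_FIP [IsArtinian R M] {ι : Type} (A : ι → Set M)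
    (hA : ∀ t, IsCoset R (A t))
    (hfip : ∀ s : Finset ι, (⋂ t ∈ s, A t).Nonempty) :
    IsCoset R (⋂ t, A t) := by
  classical
  let S : Set (Set M) := {B | ∃ s : Finset ι, B = ⋂ t ∈ s, A t}
  have hcoset : ∀ s : Finset ι, IsCoset R (⋂ t ∈ s, A t) := by
    intro s
    induction s using Finset.induction_on with
    | empty => simpa using coset_univ
    | @insert a s ha ih =>
      rw [Finset.set_biInter_insert]
      have h1 : (⋂ t ∈ s, A t).Nonempty := hfip s
      have h2 : (A a ∩ ⋂ t ∈ s, A t).Nonempty := by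
        have := hfip (insert a s)
        rwa [Finset.set_biInter_insert] at this
      exact coset_inter (hA a) ih h2
  have hSmem : ∀ B ∈ S, IsCoset R B := by rintro B ⟨s, rfl⟩; exact hcoset s
  have hdir : ∀ B ∈ S, ∀ C ∈ S, ∃ D ∈ S, D ⊆ B ∧ D ⊆ C := by
    rintro B ⟨s, rfl⟩ C ⟨s', rfl⟩
    refine ⟨⋂ t ∈ s ∪ s', A t, ⟨s ∪ s', rfl⟩, ?_, ?_⟩
    · exact Set.biInter_subset_biInter_left (fun t ht => Finset.mem_union_left _ ht)
    · exact Set.biInter_subset_biInter_left (fun t ht => Finset.mem_union_right _ ht)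
  obtain ⟨B₀, hB₀S, hB₀min⟩ := exists_min_of_directed S hSmem hdir ⟨_, ⟨∅, rfl⟩⟩
  have : (⋂ t, A t) = B₀ := by
    apply Set.Subset.antisymm
    · obtain ⟨s, rfl⟩ := hB₀S
      exact Set.subset_iInter₂ fun t _ => Set.iInter_subset A t
    · apply Set.subset_iInter
      intro t
      exact hB₀min (A t) ⟨{t}, by simp⟩
  rw [this]
  exact hSmem B₀ hB₀S

end Coset

end ProLimAux
namespace ProLimAux

section Core

variable {Λ : Type} [CommRing Λ] {I : Type} [SmallCategory I] [IsCofiltered I]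

/-- Equalize a finite list of parallel arrows in a cofiltered category. -/
lemma equalize_list {j i : I} (l : List (j ⟶ i)) (φ₀ : j ⟶ i) :
    ∃ (m : I) (ψ : m ⟶ j), ∀ φ ∈ l, ψ ≫ φ = ψ ≫ φ₀ := by
  induction l with
  | nil => exact ⟨j, 𝟙 j, by simp⟩
  | cons φ l ih =>
    obtain ⟨m, ψ, hψ⟩ := ih
    obtain ⟨w, h, hw⟩ := IsCofilteredOrEmpty.cone_maps (ψ ≫ φ) (ψ ≫ φ₀)
    refine ⟨w, h ≫ ψ, ?_⟩
    intro φ' hφ'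
    rcases List.mem_cons.mp hφ' with rfl | hφ'
    · simpa using hw
    · rw [Category.assoc, Category.assoc, hψ φ' hφ']

variable (F : I ⥤ ModuleCat.{0} Λ)

/-- The core "linear compactness" lemma: a cofiltered system of nonempty cosets inside
Artinian modules admits a compatible section. -/
lemma exists_section (hart : ∀ i, IsArtinian Λ (F.obj i))
    (A : ∀ i, Set (F.obj i)) (hA : ∀ i, IsCoset Λ (A i))
    (hstab : ∀ {i j : I} (φ : i ⟶ j), ∀ x ∈ A i, F.map φ x ∈ A j) :
    ∃ s : ∀ i, F.obj i, (∀ {i j : I} (φ : i ⟶ j), F.map φ (s i) = s j) ∧ ∀ i, s i ∈ A i := by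
  classical
  -- encode subsystems as subsets of the sigma type
  let σ := Σ i : I, F.obj i
  let fib : Set σ → ∀ i, Set (F.obj i) := fun Z i => {x | (⟨i, x⟩ : σ) ∈ Z}
  let good : Set (Set σ) := {Z |
    (∀ i, IsCoset Λ (fib Z i)) ∧
    (∀ (i j : I) (φ : i ⟶ j), ∀ x ∈ fib Z i, F.map φ x ∈ fib Z j) ∧
    (∀ i, fib Z i ⊆ A i)}
  have hA_good : {p : σ | p.2 ∈ A p.1} ∈ good := by
    refine ⟨fun i => hA i, fun i j φ x hx => hstab φ x hx, fun i x hx => hx⟩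
  -- Zorn: minimal subsystem
  obtain ⟨m, -, hm_mem, hm_min⟩ :
      ∃ m, m ⊆ {p : σ | p.2 ∈ A p.1} ∧ Minimal (· ∈ good) m := by
    apply zorn_superset_nonempty
    · intro c hcS hchain hcne
      refine ⟨⋂₀ c, ⟨?_, ?_, ?_⟩, fun Z hZ => Set.sInter_subset_of_mem hZ⟩
      · intro i
        have hfib : fib (⋂₀ c) i = ⋂₀ ((fun Z => fib Z i) '' c) := by
          ext x
          simp only [Set.mem_sInter, Set.mem_image, fib, Set.mem_setOf_eq]
          constructor
          · rintro h B ⟨Z, hZ, rfl⟩; exact h Z hZ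
          · intro h Z hZ; exact h (fib Z i) ⟨Z, hZ, rfl⟩
        rw [hfib]
        have hdir : ∀ B ∈ (fun Z => fib Z i) '' c, ∀ C ∈ (fun Z => fib Z i) '' c,
            ∃ D ∈ (fun Z => fib Z i) '' c, D ⊆ B ∧ D ⊆ C := by
          rintro B ⟨Z, hZ, rfl⟩ C ⟨Z', hZ', rfl⟩
          rcases eq_or_ne Z Z' with rfl | hne
          · exact ⟨fib Z i, ⟨Z, hZ, rfl⟩, le_refl _, le_refl _⟩
          · rcases hchain hZ hZ' hne with h | h
            · exact ⟨fib Z i, ⟨Z, hZ, rfl⟩, le_refl _, fun x hx => h hx⟩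
            · exact ⟨fib Z' i, ⟨Z', hZ', rfl⟩, fun x hx => h hx, le_refl _⟩
        obtain ⟨B₀, hB₀, hB₀min⟩ := exists_min_of_directed _
          (by rintro B ⟨Z, hZ, rfl⟩; exact (hcS hZ).1 i) hdir
          (hcne.image _)
        have : ⋂₀ ((fun Z => fib Z i) '' c) = B₀ :=
          Set.Subset.antisymm (Set.sInter_subset_of_mem hB₀) (Set.subset_sInter hB₀min)
        rw [this]
        obtain ⟨Z, hZ, rfl⟩ := hB₀
        exact (hcS hZ).1 i
      · intro i j φ x hx
        exact Set.mem_sInter.mpr fun Z hZ => (hcS hZ).2.1 i j φ x (Set.mem_sInter.mp hx Z hZ)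
      · intro i x hx
        obtain ⟨Z, hZ⟩ := hcne
        exact (hcS hZ).2.2 i (Set.mem_sInter.mp hx Z hZ)
    · exact hA_good
  obtain ⟨hm_coset, hm_stab, hm_sub⟩ := hm_mem
  set B : ∀ i, Set (F.obj i) := fib m with hB
  -- Step 1: minimality forces surjectivity of transition maps onto B
  have step1 : ∀ (i j : I) (ρ : j ⟶ i), B i ⊆ F.map ρ '' B j := by
    -- the refined system of eventual images
    intro i₀ j₀ ρ₀
    let B' : ∀ i, Set (F.obj i) := fun i => ⋂ p : Σ j : I, (j ⟶ i), F.map p.2 '' B p.1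
    have hB'B : ∀ i, B' i ⊆ B i := by
      intro i x hx
      have := Set.mem_iInter.mp hx ⟨i, 𝟙 i⟩
      simpa [CategoryTheory.Functor.map_id] using this
    -- each B' i is the minimum of a directed family of cosets
    have hdir : ∀ i, ∀ P ∈ Set.range (fun p : Σ j : I, (j ⟶ i) => F.map p.2 '' B p.1),
        ∀ Q ∈ Set.range (fun p : Σ j : I, (j ⟶ i) => F.map p.2 '' B p.1),
        ∃ D ∈ Set.range (fun p : Σ j : I, (j ⟶ i) => F.map p.2 '' B p.1), D ⊆ P ∧ D ⊆ Q := by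
      rintro i P ⟨⟨j, φ⟩, rfl⟩ Q ⟨⟨k, χ⟩, rfl⟩
      obtain ⟨w, a, b, -⟩ := IsCofilteredOrEmpty.cone_objs j k
      obtain ⟨w', h, hw'⟩ := IsCofilteredOrEmpty.cone_maps (a ≫ φ) (b ≫ χ)
      refine ⟨F.map ((h ≫ a) ≫ φ) '' B w', ⟨⟨w', (h ≫ a) ≫ φ⟩, rfl⟩, ?_, ?_⟩
      · rw [F.map_comp]
        rintro _ ⟨y, hy, rfl⟩
        exact ⟨F.map (h ≫ a) y, hm_stab _ _ _ y hy, rfl⟩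
      · have : (h ≫ a) ≫ φ = (h ≫ b) ≫ χ := by
          rw [Category.assoc, Category.assoc, hw']
        rw [this, F.map_comp]
        rintro _ ⟨y, hy, rfl⟩
        exact ⟨F.map (h ≫ b) y, hm_stab _ _ _ y hy, rfl⟩
    have hB'eq : ∀ i, ∃ p : Σ j : I, (j ⟶ i), B' i = F.map p.2 '' B p.1 ∧
        ∀ q : Σ j : I, (j ⟶ i), B' i ⊆ F.map q.2 '' B q.1 := by
      intro i
      obtain ⟨P₀, hP₀, hP₀min⟩ := exists_min_of_directed
        (Set.range (fun p : Σ j : I, (j ⟶ i) => F.map p.2 '' B p.1))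
        (by rintro P ⟨⟨j, φ⟩, rfl⟩
            exact coset_image (F.map φ).hom (hm_coset j))
        (hdir i) ⟨_, ⟨⟨i, 𝟙 i⟩, rfl⟩⟩
      obtain ⟨p₀, hp₀⟩ := hP₀
      have : B' i = P₀ := by
        apply Set.Subset.antisymm
        · rw [← hp₀]; exact Set.iInter_subset _ p₀
        · exact Set.subset_iInter fun q => hP₀min _ ⟨q, rfl⟩
      exact ⟨p₀, by rw [this]; exact hp₀.symm, fun q => by rw [this]; exact hP₀min _ ⟨q, rfl⟩⟩
    have hB'coset : ∀ i, IsCoset Λ (B' i) := by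
      intro i
      obtain ⟨p, hp, -⟩ := hB'eq i
      rw [hp]
      exact coset_image (F.map p.2).hom (hm_coset p.1)
    have hB'stab : ∀ (i j : I) (φ : i ⟶ j), ∀ x ∈ B' i, F.map φ x ∈ B' j := by
      intro i j φ x hx
      apply Set.mem_iInter.mpr
      rintro ⟨k, χ⟩
      obtain ⟨w, a, b, -⟩ := IsCofilteredOrEmpty.cone_objs i k
      obtain ⟨w', h, hw'⟩ := IsCofilteredOrEmpty.cone_maps (a ≫ φ) (b ≫ χ)
      have hx' := Set.mem_iInter.mp hx ⟨w', h ≫ a⟩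
      obtain ⟨y, hy, rfl⟩ := hx'
      have key : F.map φ (F.map (h ≫ a) y) = F.map χ (F.map (h ≫ b) y) := by
        have h1 := congrArg (fun f => F.map f y)
          (show (h ≫ a) ≫ φ = (h ≫ b) ≫ χ by rw [Category.assoc, Category.assoc, hw'])
        simpa [F.map_comp, CategoryTheory.comp_apply, Function.comp_apply] using h1
      rw [key]
      exact ⟨F.map (h ≫ b) y, hm_stab _ _ _ y hy, rfl⟩
    -- minimality: B' = B
    have hB'good : {p : σ | p.2 ∈ B' p.1} ∈ good := by
      refine ⟨?_, ?_, ?_⟩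
      · intro i
        have : fib {p : σ | p.2 ∈ B' p.1} i = B' i := rfl
        rw [this]; exact hB'coset i
      · intro i j φ x hx; exact hB'stab i j φ x hx
      · intro i x hx; exact hm_sub i (hB'B i hx)
    have hsub : {p : σ | p.2 ∈ B' p.1} ⊆ m := by
      rintro ⟨i, x⟩ hx
      exact hB'B i hx
    have heq : m ⊆ {p : σ | p.2 ∈ B' p.1} := hm_min hB'good hsub
    intro x hx
    have : x ∈ B' i₀ := heq hx
    exact Set.mem_iInter.mp this ⟨j₀, ρ₀⟩
  -- Step 2: each B i is a singleton
  have step2 : ∀ (i : I) (x : F.obj i), x ∈ B i → ∀ y ∈ B i, y = x := by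
    intro i x hxB
    let C : ∀ j, Set (F.obj j) := fun j =>
      ⋂ o : Option (j ⟶ i), (Option.rec (B j) (fun φ => F.map φ ⁻¹' {x}) o : Set (F.obj j))
    have hCfip : ∀ (j : I) (s : Finset (Option (j ⟶ i))),
        (⋂ o ∈ s, (Option.rec (B j) (fun φ => F.map φ ⁻¹' {x}) o : Set (F.obj j))).Nonempty := by
      intro j s
      classical
      rcases (s.toList.filterMap id).eq_nil_or_concat with h | ⟨l', φ₀, h⟩
      · -- no arrows in s: any element of B j works
        obtain ⟨b, hb⟩ := (hm_coset j).nonempty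
        refine ⟨b, Set.mem_biInter ?_⟩
        intro o ho
        match o with
        | none => exact hb
        | some φ =>
          exfalso
          have hmem : φ ∈ s.toList.filterMap id := by
            rw [List.mem_filterMap]
            exact ⟨some φ, by simpa using ho, rfl⟩
          rw [h] at hmem
          exact absurd hmem List.not_mem_nil
      · obtain ⟨w, ψ, hψ⟩ := equalize_list (s.toList.filterMap id) φ₀
        have hxw : x ∈ F.map (ψ ≫ φ₀) '' B w := step1 i w (ψ ≫ φ₀) hxB
        obtain ⟨a, haB, ha⟩ := hxw
        refine ⟨F.map ψ a, Set.mem_biInter ?_⟩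
        intro o ho
        match o with
        | none => exact hm_stab _ _ _ a haB
        | some φ =>
          have hφl : φ ∈ s.toList.filterMap id := by
            rw [List.mem_filterMap]
            exact ⟨some φ, by simpa using ho, rfl⟩
          have heqφ := hψ φ hφl
          simp only [Set.mem_preimage, Set.mem_singleton_iff]
          have h2 : F.map (ψ ≫ φ) a = F.map (ψ ≫ φ₀) a := by rw [heqφ]
          simp only [F.map_comp, CategoryTheory.comp_apply, Function.comp_apply] at h2 ha
          rw [h2, ha]
    have hCcoset : ∀ j, IsCoset Λ (C j) := by
      intro j
      apply coset_iInter_FIP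
      · intro o
        match o with
        | none => exact hm_coset j
        | some φ =>
          apply coset_preimage (F.map φ).hom (coset_singleton x)
          obtain ⟨a, haB, ha⟩ := step1 i j φ hxB
          exact ⟨a, by simp [ha]⟩
      · exact hCfip j
    have hCstab : ∀ (j k : I) (χ : j ⟶ k), ∀ z ∈ C j, F.map χ z ∈ C k := by
      intro j k χ z hz
      apply Set.mem_iInter.mpr
      intro o
      match o with
      | none => exact hm_stab _ _ _ z (Set.mem_iInter.mp hz none)
      | some φ =>
        have hz' := Set.mem_iInter.mp hz (some (χ ≫ φ))
        simp only [Set.mem_preimage, Set.mem_singleton_iff] at hz' ⊢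
        rw [← hz']
        have := F.map_comp χ φ
        rw [this]
        rfl
    have hCB : ∀ j, C j ⊆ B j := fun j z hz => Set.mem_iInter.mp hz none
    have hCgood : {p : σ | p.2 ∈ C p.1} ∈ good := by
      refine ⟨fun j => hCcoset j, fun j k χ z hz => hCstab j k χ z hz,
        fun j z hz => hm_sub j (hCB j hz)⟩
    have heq : m ⊆ {p : σ | p.2 ∈ C p.1} :=
      hm_min hCgood (fun ⟨j, z⟩ hz => hCB j hz)
    intro y hyB
    have : y ∈ C i := heq hyB
    have := Set.mem_iInter.mp this (some (𝟙 i))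
    simp only [Set.mem_preimage, Set.mem_singleton_iff, CategoryTheory.Functor.map_id] at this
    exact this
  -- extract the section
  choose b hb using fun i => (hm_coset i).nonempty
  refine ⟨b, ?_, fun i => hm_sub i (hb i)⟩
  intro i j φ
  exact step2 j (b j) (hb j) (F.map φ (b i)) (hm_stab _ _ _ (b i) (hb i))

end Core

end ProLimAux
namespace ProLimAux

section Assemble

variable {Λ : Type} [CommRing Λ] {I : Type} [SmallCategory I] [IsCofiltered I]

/-- Build an element of the categorical limit from a compatible family. -/
noncomputable def mkLim (F : I ⥤ ModuleCat.{0} Λ) (s : (F ⋙ forget (ModuleCat.{0} Λ)).sections) :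
    ↥(limit F) :=
  (preservesLimitIso (forget (ModuleCat.{0} Λ)) F).inv
    ((Types.limitEquivSections (F ⋙ forget (ModuleCat.{0} Λ))).symm s)

omit [IsCofiltered I] in
lemma mkLim_π (F : I ⥤ ModuleCat.{0} Λ) (s : (F ⋙ forget (ModuleCat.{0} Λ)).sections) (i : I) :
    limit.π F i (mkLim F s) = s.1 i := by
  have h := ConcreteCategory.congr_hom (preservesLimitIso_inv_π (forget (ModuleCat.{0} Λ)) F i)
    ((Types.limitEquivSections (F ⋙ forget (ModuleCat.{0} Λ))).symm s)
  simp only [types_comp_apply] at h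
  have h2 := Types.limitEquivSections_symm_apply (F ⋙ forget (ModuleCat.{0} Λ)) s i
  exact h.trans h2

omit [IsCofiltered I] in
lemma π_naturality {F G : I ⥤ ModuleCat.{0} Λ} (η : F ⟶ G) (i : I) (x : ↥(limit F)) :
    limit.π G i (limMap η x) = η.app i (limit.π F i x) := by
  have h := ConcreteCategory.congr_hom (limMap_π η i) x
  simp only [CategoryTheory.comp_apply, Function.comp_apply] at h
  exact h

omit [IsCofiltered I] in
lemma π_compat (F : I ⥤ ModuleCat.{0} Λ) {i j : I} (φ : i ⟶ j) (x : ↥(limit F)) :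
    F.map φ (limit.π F i x) = limit.π F j x := by
  have h := ConcreteCategory.congr_hom (limit.w F φ) x
  simp only [CategoryTheory.comp_apply, Function.comp_apply] at h
  exact h

end Assemble

end ProLimAux

open ProLimAux in
theorem lim_finite_length_exact_and_reflects
    {Λ : Type} [CommRing Λ] [IsNoetherianRing Λ] [IsLocalRing Λ]
    [IsAdicComplete (IsLocalRing.maximalIdeal Λ) Λ]
    {I : Type} [SmallCategory I] [IsCofiltered I] :
    (∀ (F G H : I ⥤ ModuleCat.{0} Λ),
      (∀ i, IsFiniteLength Λ (F.obj i)) →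
      (∀ i, IsFiniteLength Λ (G.obj i)) →
      (∀ i, IsFiniteLength Λ (H.obj i)) →
      ∀ (η : F ⟶ G) (θ : G ⟶ H),
        (∀ i, Function.Injective (η.app i)) →
        (∀ i, Function.Surjective (θ.app i)) →
        (∀ i, Function.Exact (η.app i) (θ.app i)) →
        Function.Injective (limMap η) ∧
        Function.Surjective (limMap θ) ∧
        Function.Exact (limMap η) (limMap θ))
    ∧
    (∀ (F : I ⥤ ModuleCat.{0} Λ),
      (∀ i, IsFiniteLength Λ (F.obj i)) →
      (∀ {i j : I} (φ : i ⟶ j), Function.Surjective (F.map φ)) →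
      Subsingleton ↥(limit F) →
      ∀ i, Subsingleton ↥(F.obj i)) := by
  constructor
  · intro F G H hF hG hH η θ hinj hsurj hexact
    have hartG : ∀ i, IsArtinian Λ (G.obj i) := fun i =>
      (isFiniteLength_iff_isNoetherian_isArtinian.mp (hG i)).2
    refine ⟨?_, ?_, ?_⟩
    · -- injectivity
      intro x y hxy
      refine Concrete.limit_ext F x y fun i => ?_
      show limit.π F i x = limit.π F i y
      apply hinj i
      rw [← π_naturality η i x, ← π_naturality η i y, hxy]
    · -- surjectivity
      intro y
      set A : ∀ i, Set (G.obj i) := fun i => (θ.app i) ⁻¹' {limit.π H i y} with hAdef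
      have hA : ∀ i, IsCoset Λ (A i) := by
        intro i
        apply coset_preimage (θ.app i).hom (coset_singleton _)
        obtain ⟨g, hg⟩ := hsurj i (limit.π H i y)
        exact ⟨g, by simp [hAdef, hg]⟩
      have hstab : ∀ {i j : I} (φ : i ⟶ j), ∀ z ∈ A i, G.map φ z ∈ A j := by
        intro i j φ z hz
        simp only [hAdef, Set.mem_preimage, Set.mem_singleton_iff] at hz ⊢
        have hnat := ConcreteCategory.congr_hom (θ.naturality φ) z
        simp only [CategoryTheory.comp_apply, Function.comp_apply] at hnat
        rw [hnat, hz, π_compat H φ y]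
      obtain ⟨s, hcompat, hmem⟩ := exists_section G hartG A hA hstab
      refine ⟨mkLim G ⟨s, fun {i j} φ => hcompat φ⟩, ?_⟩
      refine Concrete.limit_ext H _ _ fun i => ?_
      show limit.π H i (limMap θ (mkLim G ⟨s, fun {i j} φ => hcompat φ⟩)) = limit.π H i y
      rw [π_naturality θ i, mkLim_π]
      exact hmem i
    · -- exactness
      intro y
      constructor
      · intro hy
        -- each component lifts uniquely to F
        have hlift : ∀ i, ∃ x, η.app i x = limit.π G i y := by
          intro i
          have : θ.app i (limit.π G i y) = 0 := by
            rw [← π_naturality θ i y, hy, map_zero]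
          exact (hexact i _).mp this
        choose s hs using hlift
        have hcompat : ∀ {i j : I} (φ : i ⟶ j), F.map φ (s i) = s j := by
          intro i j φ
          apply hinj j
          have hnat := ConcreteCategory.congr_hom (η.naturality φ) (s i)
          simp only [CategoryTheory.comp_apply, Function.comp_apply] at hnat
          rw [hnat, hs i, hs j, π_compat G φ y]
        refine ⟨mkLim F ⟨s, fun {i j} φ => hcompat φ⟩, ?_⟩
        refine Concrete.limit_ext G _ _ fun i => ?_
        show limit.π G i (limMap η (mkLim F ⟨s, fun {i j} φ => hcompat φ⟩)) = limit.π G i y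
        rw [π_naturality η i, mkLim_π]
        exact hs i
      · rintro ⟨x, rfl⟩
        refine Concrete.limit_ext H _ _ fun i => ?_
        show limit.π H i (limMap θ (limMap η x)) = limit.π H i 0
        rw [π_naturality θ i, π_naturality η i, (hexact i).apply_apply_eq_zero, map_zero]
  · -- strict pro-object with vanishing limit
    intro F hF hsurj hsub i
    have hart : ∀ j, IsArtinian Λ (F.obj j) := fun j =>
      (isFiniteLength_iff_isNoetherian_isArtinian.mp (hF j)).2
    suffices h : ∀ x : F.obj i, x = 0 by
      exact ⟨fun a b => by rw [h a, h b]⟩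
    intro x
    set A : ∀ j, Set (F.obj j) := fun j => ⋂ φ : j ⟶ i, (F.map φ) ⁻¹' {x} with hAdef
    have hA : ∀ j, IsCoset Λ (A j) := by
      intro j
      apply coset_iInter_FIP
      · intro φ
        apply coset_preimage (F.map φ).hom (coset_singleton x)
        obtain ⟨a, ha⟩ := hsurj φ x
        exact ⟨a, by simp [ha]⟩
      · intro s
        rcases (s.toList).eq_nil_or_concat with h | ⟨l', φ₀, h⟩
        · refine ⟨0, Set.mem_biInter ?_⟩
          intro φ hφ
          exfalso
          have : φ ∈ s.toList := Finset.mem_toList.mpr hφ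
          rw [h] at this
          exact absurd this List.not_mem_nil
        · obtain ⟨w, ψ, hψ⟩ := equalize_list s.toList φ₀
          obtain ⟨a, ha⟩ := hsurj (ψ ≫ φ₀) x
          refine ⟨F.map ψ a, Set.mem_biInter ?_⟩
          intro φ hφ
          have hφl : φ ∈ s.toList := Finset.mem_toList.mpr hφ
          have heqφ := hψ φ hφl
          simp only [Set.mem_preimage, Set.mem_singleton_iff]
          have h2 : F.map (ψ ≫ φ) a = F.map (ψ ≫ φ₀) a := by rw [heqφ]
          simp only [F.map_comp, CategoryTheory.comp_apply, Function.comp_apply] at h2 ha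
          rw [h2, ha]
    have hstab : ∀ {j k : I} (χ : j ⟶ k), ∀ z ∈ A j, F.map χ z ∈ A k := by
      intro j k χ z hz
      apply Set.mem_iInter.mpr
      intro φ
      have hz' := Set.mem_iInter.mp hz (χ ≫ φ)
      simp only [Set.mem_preimage, Set.mem_singleton_iff] at hz' ⊢
      rw [← hz']
      simp [F.map_comp, CategoryTheory.comp_apply]
    obtain ⟨s, hcompat, hmem⟩ := exists_section F hart A hA hstab
    have hx : s i = x := by
      have := Set.mem_iInter.mp (hmem i) (𝟙 i)
      simpa [CategoryTheory.Functor.map_id] using this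
    have hzero : mkLim F ⟨s, fun {i j} φ => hcompat φ⟩ = 0 := Subsingleton.elim _ _
    have hπ := mkLim_π F ⟨s, fun {i j} φ => hcompat φ⟩ i
    rw [hzero, map_zero] at hπ
    rw [← hx]
    exact hπ.symm
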